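/- Let X, Y, Z be independent random variables, each exponentially distributed with rate 1, and let γ_R, γ_D, γ_E > 0 and R > 0 be real numbers. Then the probability that min( log₂((1 + γ_D·Y)/(1 + γ_E·Z)), log₂(1 + γ_R·X) ) < R (equivalently, the probability of the event { (1 + γ_D·Y)/(1 + γ_E·Z) < 2^R or 1 + γ_R·X < 2^R }) equals 1 − exp(−(2^R − 1)/γ_R − (2^R − 1)/γ_D) · (1 + (2^R/γ_D)·γ_E)^{−1}. (Secrecy outage probability of Case I, where only the relay-to-destination link is wiretapped.) -/

import Mathlib

/-!
The complement of the outage event is the product event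
`{X ≥ (c - 1)/γR} × {(1 + γD Y)/(1 + γE Z) ≥ c}` with `c = 2^R`. Since `Z ≥ 0` almost surely, the
second factor is `{Y ≥ (c - 1)/γD + (c γE/γD) Z}`; conditioning on `Z` and using the exponential tail
`P(Y ≥ t) = exp (-t)` reduces its probability to the Laplace transform of `Z`,
`E[exp (-b Z)] = 1/(1 + b)`.
-/

open MeasureTheory ProbabilityTheory Real Set

namespace ProbabilityTheory

lemma expMeasure_eq_withDensity (r : ℝ) :
    expMeasure r = volume.withDensity (exponentialPDF r) := rfl

lemma measurable_exponentialPDF (r : ℝ) : Measurable (exponentialPDF r) :=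
  (measurable_exponentialPDFReal r).ennreal_ofReal

instance (r : ℝ) : SFinite (expMeasure r) := by
  rw [expMeasure_eq_withDensity]; infer_instance

instance (r : ℝ) : NullSingletonClass (expMeasure r) :=
  ⟨fun x => withDensity_absolutelyContinuous _ _ (measure_singleton x)⟩

lemma ae_nonneg_expMeasure (r : ℝ) : ∀ᵐ x ∂expMeasure r, 0 ≤ x :=
  (ae_withDensity_iff (measurable_exponentialPDF r)).2 <| .of_forall fun _ hx =>
    not_lt.1 fun hneg => hx (exponentialPDF_of_neg hneg)

lemma expMeasure_Ici {r t : ℝ} (hr : 0 < r) (ht : 0 ≤ t) :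
    expMeasure r (Ici t) = ENNReal.ofReal (exp (-(r * t))) := by
  have := isProbabilityMeasure_expMeasure hr
  have hle : exp (-(r * t)) ≤ 1 := exp_le_one_iff.2 (by nlinarith)
  rw [← measure_congr Ioi_ae_eq_Ici, ← compl_Iic, prob_compl_eq_one_sub measurableSet_Iic,
    ← ofReal_cdf, cdf_expMeasure_eq hr, if_pos ht, ← ENNReal.ofReal_one,
    ← ENNReal.ofReal_sub _ (by linarith), sub_sub_cancel]

lemma lintegral_exp_neg_mul_expMeasure {r b : ℝ} (hr : 0 < r) (hb : 0 ≤ b) :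
    ∫⁻ x, ENNReal.ofReal (exp (-(b * x))) ∂expMeasure r = ENNReal.ofReal (r / (r + b)) := by
  have hrb : 0 < r + b := by linarith
  have hdensity : exponentialPDF r * (fun x => ENNReal.ofReal (exp (-(b * x))))
      = fun x => ENNReal.ofReal (r / (r + b)) * exponentialPDF (r + b) x := by
    ext x
    rcases lt_or_ge x 0 with hx | hx
    · simp [exponentialPDF_of_neg hx]
    · rw [Pi.mul_apply, exponentialPDF_of_nonneg hx, exponentialPDF_of_nonneg hx,
        ← ENNReal.ofReal_mul (by positivity), ← ENNReal.ofReal_mul (by positivity),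
        mul_assoc, ← exp_add]
      congr 1
      field_simp
      ring_nf
  rw [expMeasure_eq_withDensity, lintegral_withDensity_eq_lintegral_mul _
      (measurable_exponentialPDF r) (by fun_prop), hdensity,
    lintegral_const_mul _ (measurable_exponentialPDF _), lintegral_exponentialPDF_eq_one hrb,
    mul_one]

lemma expMeasure_prod_setOf_add_mul_le {r s a b : ℝ} (hr : 0 < r) (hs : 0 < s) (ha : 0 ≤ a)
    (hb : 0 ≤ b) :
    (expMeasure r).prod (expMeasure s) {q | a + b * q.2 ≤ q.1}
      = ENNReal.ofReal (exp (-(r * a)) * (s / (s + r * b))) := by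
  have hslice : ∀ᵐ z ∂expMeasure s, expMeasure r ((·, z) ⁻¹' {q | a + b * q.2 ≤ q.1})
      = ENNReal.ofReal (exp (-(r * a))) * ENNReal.ofReal (exp (-(r * b * z))) := by
    filter_upwards [ae_nonneg_expMeasure s] with z hz
    have hpre : (·, z) ⁻¹' {q : ℝ × ℝ | a + b * q.2 ≤ q.1} = Ici (a + b * z) := rfl
    rw [hpre, expMeasure_Ici hr (by positivity), ← ENNReal.ofReal_mul (exp_pos _).le, ← exp_add]
    ring_nf
  rw [Measure.prod_apply_symm (measurableSet_le (by fun_prop) (by fun_prop)),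
    lintegral_congr_ae hslice, lintegral_const_mul _ (by fun_prop),
    lintegral_exp_neg_mul_expMeasure hs (by positivity), ENNReal.ofReal_mul (exp_pos _).le]

lemma expMeasure_prod_setOf_le_div {r s c α β : ℝ} (hr : 0 < r) (hs : 0 < s) (hc : 1 ≤ c)
    (hα : 0 < α) (hβ : 0 ≤ β) :
    (expMeasure r).prod (expMeasure s) {q | c ≤ (1 + α * q.1) / (1 + β * q.2)}
      = ENNReal.ofReal (exp (-(r * ((c - 1) / α))) * (s / (s + r * (c * β / α)))) := by
  rw [← expMeasure_prod_setOf_add_mul_le hr hs (div_nonneg (by linarith) hα.le)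
    (by positivity)]
  refine measure_congr ?_
  filter_upwards [Measure.quasiMeasurePreserving_snd.ae (ae_nonneg_expMeasure s)] with q hq
  have hthreshold : (c - 1) / α + c * β / α * q.2 = (c * (1 + β * q.2) - 1) / α := by
    field_simp; ring
  change (c ≤ (1 + α * q.1) / (1 + β * q.2)) = ((c - 1) / α + c * β / α * q.2 ≤ q.1)
  rw [hthreshold, le_div_iff₀ (by positivity), div_le_iff₀ hα]
  exact propext ⟨fun h => by linarith, fun h => by linarith⟩

end ProbabilityTheory

theorem case1_SOP (γR γD γE R : ℝ) (hγR : 0 < γR) (hγD : 0 < γD) (hγE : 0 < γE)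
    (hR : 0 < R) :
    ((expMeasure 1).prod ((expMeasure 1).prod (expMeasure 1)))
      {p : ℝ × ℝ × ℝ |
        (1 + γD * p.2.1) / (1 + γE * p.2.2) < (2 : ℝ) ^ R ∨ 1 + γR * p.1 < (2 : ℝ) ^ R}
      = ENNReal.ofReal
        (1 - Real.exp (-((2 : ℝ) ^ R - 1) / γR - ((2 : ℝ) ^ R - 1) / γD) *
          (1 + ((2 : ℝ) ^ R / γD) * γE)⁻¹) := by
  have := isProbabilityMeasure_expMeasure one_pos
  set c : ℝ := (2 : ℝ) ^ R
  have hc : 1 < c := one_lt_rpow (by norm_num) hR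
  have houtage : {p : ℝ × ℝ × ℝ | (1 + γD * p.2.1) / (1 + γE * p.2.2) < c ∨ 1 + γR * p.1 < c}
      = (Ici ((c - 1) / γR) ×ˢ {q : ℝ × ℝ | c ≤ (1 + γD * q.1) / (1 + γE * q.2)})ᶜ := by
    ext p
    have hX : 1 + γR * p.1 < c ↔ p.1 < (c - 1) / γR := by
      rw [lt_div_iff₀ hγR]; constructor <;> intro <;> linarith
    simp only [mem_ofPred_eq, mem_compl_iff, mem_prod, mem_Ici, not_and_or, not_le, hX]
    exact or_comm
  rw [houtage, prob_compl_eq_one_sub (measurableSet_Ici.prod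
      (measurableSet_le (by fun_prop) (by fun_prop))), Measure.prod_prod,
    expMeasure_Ici one_pos (by positivity),
    expMeasure_prod_setOf_le_div one_pos one_pos hc.le hγD hγE.le,
    ← ENNReal.ofReal_mul (by positivity), ← ENNReal.ofReal_one,
    ← ENNReal.ofReal_sub _ (by positivity)]
  congr 2
  rw [show -(c - 1) / γR - (c - 1) / γD = -(1 * ((c - 1) / γR)) + -(1 * ((c - 1) / γD)) by ring,
    exp_add]
  field_simp
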